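/- The total number of humps in all Motzkin paths of order n equals (1/2)·(∑_{j≥0} C(n,j)·C(n-j,j) − 1). -/

import Mathlib

inductive MStep | U | F | D
deriving DecidableEq

def IsMotzkin (w : List MStep) : Prop :=
  w.count MStep.U = w.count MStep.D ∧
    ∀ p, p <+: w → p.count MStep.D ≤ p.count MStep.U

/-- A hump starting at position `i`: a `U`, then `k ≥ 0` `F`s, then a `D`. -/
def IsHumpAt (w : List MStep) (i : ℕ) : Prop :=
  ∃ k, w[i]? = some MStep.U ∧ (∀ j < k, w[i + 1 + j]? = some MStep.F) ∧
    w[i + 1 + k]? = some MStep.D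

/-!
Write a hump as `A U F^k D B`; removing it leaves the Motzkin path `A ++ B`. The map
`A U F^k D B ↦ F^k U B D A` is a bijection from humps of Motzkin paths of length `n` onto the
bridges of length `n` (paths from level `0` to level `0`, allowed to go below the axis) whose first
non-flat step is `U`: the inverse cuts the part after that `U` just before it first reaches its
minimum level. Exchanging `U` and `D` matches these with the bridges whose first non-flat step is
`D`, and the only other bridge is `F^n`. So twice the number of humps, plus one, is the number of
bridges, i.e. of words with as many `U`s as `D`s; choosing first the `j` positions of the `U`s and
then those of the `D`s gives `∑ j, C(n, j) * C(n - j, j)`.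
-/

namespace MStep

instance : Fintype MStep := ⟨{U, F, D}, fun x => by cases x <;> simp⟩

open Finset

def level : MStep → ℤ
  | U => 1
  | F => 0
  | D => -1

def height (w : List MStep) : ℤ := (w.map level).sum

@[simp] lemma height_nil : height [] = 0 := rfl

@[simp] lemma height_cons (x : MStep) (w : List MStep) :
    height (x :: w) = level x + height w := by
  simp [height]

@[simp] lemma height_append (u v : List MStep) : height (u ++ v) = height u + height v := by
  simp [height]

@[simp] lemma height_replicate_F (k : ℕ) : height (List.replicate k F) = 0 := by
  simp [height, List.sum_replicate, level]

lemma height_eq_count_sub_count (w : List MStep) :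
    height w = (w.count U : ℤ) - w.count D := by
  induction w with
  | nil => simp
  | cons x w ih => cases x <;> simp [ih, level] <;> ring

/-- The path `w`, started at level `c`, never goes below the axis. -/
def StaysNonneg (c : ℤ) (w : List MStep) : Prop := ∀ i, 0 ≤ c + height (w.take i)

lemma StaysNonneg.nonneg {c : ℤ} {w : List MStep} (h : StaysNonneg c w) : 0 ≤ c := by
  simpa using h 0

lemma StaysNonneg.nonneg_end {c : ℤ} {w : List MStep} (h : StaysNonneg c w) :
    0 ≤ c + height w := by
  simpa using h w.length

@[simp] lemma staysNonneg_nil {c : ℤ} : StaysNonneg c [] ↔ 0 ≤ c := by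
  simp [StaysNonneg]

@[simp] lemma staysNonneg_cons {c : ℤ} {x : MStep} {w : List MStep} :
    StaysNonneg c (x :: w) ↔ 0 ≤ c ∧ StaysNonneg (c + level x) w := by
  refine ⟨fun h => ⟨h.nonneg, fun i => ?_⟩, fun ⟨hc, h⟩ i => ?_⟩
  · simpa [add_assoc] using h (i + 1)
  · cases i with
    | zero => simpa using hc
    | succ i => simpa [add_assoc] using h i

@[simp] lemma staysNonneg_append {c : ℤ} {u v : List MStep} :
    StaysNonneg c (u ++ v) ↔ StaysNonneg c u ∧ StaysNonneg (c + height u) v := by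
  induction u generalizing c with
  | nil => simpa using fun h : StaysNonneg c v => h.nonneg
  | cons x u ih => simp [ih, add_assoc, and_assoc]

@[simp] lemma staysNonneg_replicate_F {c : ℤ} {k : ℕ} :
    StaysNonneg c (List.replicate k F) ↔ 0 ≤ c := by
  induction k with
  | zero => simp
  | succ k ih => simp [List.replicate_succ, ih, level]

lemma isMotzkin_iff (w : List MStep) : IsMotzkin w ↔ height w = 0 ∧ StaysNonneg 0 w := by
  simp only [IsMotzkin, StaysNonneg, height_eq_count_sub_count, zero_add, sub_nonneg, sub_eq_zero,
    Nat.cast_le, Nat.cast_inj]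
  refine and_congr_right fun _ => ⟨fun h i => h _ (w.take_prefix i), fun h p hp => ?_⟩
  rw [List.prefix_iff_eq_take.mp hp]
  exact h _

lemma isMotzkin_append_iff (u v : List MStep) :
    IsMotzkin (u ++ v) ↔
      height u + height v = 0 ∧ StaysNonneg 0 u ∧ StaysNonneg (height u) v := by
  simp [isMotzkin_iff]

def insertHump (A : List MStep) (k : ℕ) (B : List MStep) : List MStep :=
  A ++ U :: (List.replicate k F ++ D :: B)

lemma isMotzkin_insertHump_iff (A B : List MStep) (k : ℕ) :
    IsMotzkin (insertHump A k B) ↔ IsMotzkin (A ++ B) := by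
  simp only [insertHump, isMotzkin_append_iff, height_cons, height_append, height_replicate_F,
    staysNonneg_cons, staysNonneg_append, staysNonneg_replicate_F, level, add_zero, zero_add,
    add_neg_cancel_left, add_neg_cancel_right]
  refine ⟨fun ⟨hAB, hA, _, _, _, hB⟩ => ⟨hAB, hA, hB⟩, fun ⟨hAB, hA, hB⟩ => ?_⟩
  have := hA.nonneg_end
  exact ⟨hAB, hA, by linarith, by linarith, by linarith, hB⟩

lemma isHumpAt_iff (w : List MStep) (i : ℕ) :
    IsHumpAt w i ↔ ∃ A k B, A.length = i ∧ w = insertHump A k B := by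
  constructor
  · rintro ⟨k, hU, hF, hD⟩
    have hi : i < w.length := (List.getElem?_eq_some_iff.mp hU).1
    have hdrop : w.drop i = U :: (List.replicate k F ++ D :: w.drop (i + k + 2)) := by
      refine List.ext_getElem? fun m => ?_
      rcases m with _ | m
      · simpa using hU
      rw [List.getElem?_drop, List.getElem?_cons_succ, List.getElem?_append, List.length_replicate]
      split_ifs with hm
      · simpa [hm, add_assoc, add_comm 1] using hF m hm
      obtain ⟨r, rfl⟩ := Nat.exists_eq_add_of_le (not_lt.mp hm)
      rcases r with _ | r
      · simpa [add_assoc, add_comm 1] using hD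
      · simp only [List.getElem?_drop, Nat.add_sub_cancel_left, List.getElem?_cons_succ]
        congr 1
        omega
    refine ⟨w.take i, k, w.drop (i + k + 2), by simp [hi.le], ?_⟩
    rw [insertHump, ← hdrop, List.take_append_drop]
  · rintro ⟨A, k, B, rfl, rfl⟩
    refine ⟨k, by simp [insertHump], fun j hj => ?_, ?_⟩
    · simp [insertHump, add_assoc, add_comm 1, List.getElem?_append, hj]
    · simp [insertHump, add_assoc, add_comm 1]

lemma replicate_F_append_cons_inj {k k' : ℕ} {x x' : MStep} {v v' : List MStep}
    (hx : x ≠ F) (hx' : x' ≠ F)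
    (h : List.replicate k F ++ x :: v = List.replicate k' F ++ x' :: v') :
    k = k' ∧ x = x' ∧ v = v' := by
  induction k generalizing k' with
  | zero => cases k' <;> simp_all [List.replicate_succ]
  | succ k ih => cases k' <;> simp_all [List.replicate_succ]

lemma insertHump_inj {A A' B B' : List MStep} {k k' : ℕ} (hA : A.length = A'.length)
    (h : insertHump A k B = insertHump A' k' B') : A = A' ∧ k = k' ∧ B = B' := by
  obtain ⟨rfl, hrest⟩ := List.append_inj h hA
  obtain ⟨rfl, -, rfl⟩ :=
    replicate_F_append_cons_inj (by simp) (by simp) (List.cons_inj_right _ |>.mp hrest)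
  exact ⟨rfl, rfl, rfl⟩

lemma not_isMotzkin_of_extended_split {A' B q : List MStep}
    (h : IsMotzkin ((q ++ D :: A') ++ B)) (h' : IsMotzkin (A' ++ (B ++ D :: q))) : False := by
  simp only [isMotzkin_append_iff, staysNonneg_append, staysNonneg_cons, height_append,
    height_cons, level] at h h'
  obtain ⟨hsum, ⟨-, -, hq⟩, -⟩ := h
  obtain ⟨-, -, -, -, hAB⟩ := h'
  linarith [hq.nonneg, hAB.nonneg]

lemma split_unique {A A' B B' : List MStep} (h : B ++ D :: A = B' ++ D :: A')
    (hm : IsMotzkin (A ++ B)) (hm' : IsMotzkin (A' ++ B')) : B = B' ∧ A = A' := by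
  rcases List.append_eq_append_iff.mp h with
    ⟨_ | ⟨x, q⟩, rfl, hA⟩ | ⟨_ | ⟨x, q⟩, rfl, hA'⟩
  · simp_all
  · obtain ⟨rfl, rfl⟩ := List.cons_eq_cons.mp hA
    exact (not_isMotzkin_of_extended_split hm hm').elim
  · simp_all
  · obtain ⟨rfl, rfl⟩ := List.cons_eq_cons.mp hA'
    exact (not_isMotzkin_of_extended_split hm' hm).elim

/-- Cut `v` just before the first time it reaches its minimum level. -/
lemma exists_split_of_height_eq_neg_one {v : List MStep} (hv : height v = -1) :
    ∃ B A, v = B ++ D :: A ∧ IsMotzkin (A ++ B) := by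
  classical
  set f : ℕ → ℤ := fun i => height (v.take i)
  have hex : ∃ i, ∀ j, f i ≤ f j := by
    obtain ⟨i, -, hi⟩ := (Finset.range (v.length + 1)).exists_min_image f ⟨0, by simp⟩
    refine ⟨i, fun j => ?_⟩
    rcases le_or_gt j v.length with hj | hj
    · exact hi j (by simpa [Nat.lt_succ_iff] using hj)
    · simpa [f, List.take_of_length_le hj.le] using hi v.length (by simp)
  set i := Nat.find hex
  have hmin : ∀ j, f i ≤ f j := Nat.find_spec hex
  have hfirst : ∀ j < i, f i < f j := fun j hj => by
    obtain ⟨j', hj'⟩ := not_forall.mp (Nat.find_min hex hj)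
    linarith [hmin j']
  have hend : f v.length = -1 := by simpa [f] using hv
  obtain ⟨i', hi'⟩ : ∃ i', i = i' + 1 :=
    Nat.exists_eq_add_one.mpr <| Nat.pos_of_ne_zero fun h0 => by
    have := hmin v.length
    simp [h0, f] at this
    linarith
  have hilen : i' < v.length := by
    by_contra! hle
    have := hfirst v.length (by omega)
    simp [f, hi', List.take_of_length_le (hle.trans (Nat.le_succ _))] at this
  have hstep : f i = f i' + level v[i'] := by
    rw [hi']
    simp only [f, List.take_add_one, List.getElem?_eq_getElem hilen, Option.toList_some,
      height_append, height_cons, height_nil, add_zero]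
  have hD : v[i'] = D := by
    have := hstep ▸ hfirst i' (by omega)
    revert this
    cases v[i'] <;> simp [level]
  have hsplit : v = v.take i' ++ D :: v.drop i := by
    rw [← hD, hi', List.getElem_cons_drop, List.take_append_drop]
  have hfi : f i = height (v.take i') - 1 := by simp [hstep, hD, f, level, sub_eq_add_neg]
  have hvsum := congrArg height hsplit
  simp only [height_append, height_cons, level] at hvsum
  refine ⟨v.take i', v.drop i, hsplit,
    (isMotzkin_append_iff _ _).mpr ⟨by linarith, fun j => ?_, fun j => ?_⟩⟩
  · have := hmin (i + j)
    simp only [f, List.take_add, height_append] at this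
    linarith
  · have := hfirst (min j i') (by omega)
    simp only [f, List.take_take] at this ⊢
    linarith

def leadingStep (w : List MStep) : Option MStep := w.find? (· != F)

lemma leadingStep_eq_some_iff {w : List MStep} {x : MStep} :
    leadingStep w = some x ↔ x ≠ F ∧ ∃ k v, w = List.replicate k F ++ x :: v := by
  simp only [leadingStep, List.find?_eq_some_iff_append, bne_iff_ne, ne_eq,
    Bool.not_eq_true', bne_eq_false_iff_eq]
  refine and_congr_right fun _ => ⟨fun ⟨as, bs, h, has⟩ => ⟨as.length, bs, ?_⟩,
    fun ⟨k, v, h⟩ => ⟨_, v, h, fun a ha => List.eq_of_mem_replicate ha⟩⟩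
  rwa [← List.eq_replicate_iff.mpr ⟨rfl, has⟩]

lemma leadingStep_eq_none_iff {w : List MStep} :
    leadingStep w = none ↔ w = List.replicate w.length F := by
  simp [leadingStep, List.eq_replicate_iff]

def swap : MStep → MStep
  | U => D
  | F => F
  | D => U

@[simp] lemma swap_swap (x : MStep) : swap (swap x) = x := by cases x <;> rfl

@[simp] lemma swap_eq_iff {x y : MStep} : swap x = y ↔ x = swap y := by
  cases x <;> cases y <;> decide

lemma map_swap_involutive : Function.Involutive (List.map swap) := fun w => by
  simp [Function.comp_def]

@[simp] lemma level_swap (x : MStep) : level (swap x) = -level x := by cases x <;> rfl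

@[simp] lemma height_map_swap (w : List MStep) : height (w.map swap) = -height w := by
  induction w with
  | nil => simp
  | cons x w ih => simp [ih, add_comm]

lemma leadingStep_map_swap (w : List MStep) :
    leadingStep (w.map swap) = (leadingStep w).map swap := by
  simp only [leadingStep, List.find?_map]
  congr 2
  funext x
  cases x <;> rfl

def bridgeOfHump (A : List MStep) (k : ℕ) (B : List MStep) : List MStep :=
  List.replicate k F ++ U :: (B ++ D :: A)

/-- The hump `A U F^k D B` of a Motzkin path of length `n`, encoded as `(A, k, B)`. -/
def humpTriples (n : ℕ) : Set (List MStep × ℕ × List MStep) :=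
  {x | x.1.length + x.2.1 + x.2.2.length + 2 = n ∧ IsMotzkin (x.1 ++ x.2.2)}

def bridges (n : ℕ) : Set (List MStep) := {w | w.length = n ∧ height w = 0}

lemma ncard_humps_eq_ncard_humpTriples (n : ℕ) :
    {p : List MStep × ℕ | p.1.length = n ∧ IsMotzkin p.1 ∧ IsHumpAt p.1 p.2}.ncard =
      (humpTriples n).ncard := by
  have himage : (fun x => (insertHump x.1 x.2.1 x.2.2, x.1.length)) '' humpTriples n =
      {p : List MStep × ℕ | p.1.length = n ∧ IsMotzkin p.1 ∧ IsHumpAt p.1 p.2} := by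
    ext ⟨w, i⟩
    simp only [Set.mem_image, humpTriples, Set.mem_ofPred_eq, Prod.mk.injEq, isHumpAt_iff,
      Prod.exists]
    constructor
    · rintro ⟨A, k, B, ⟨hlen, hm⟩, rfl, rfl⟩
      refine ⟨?_, (isMotzkin_insertHump_iff ..).mpr hm, A, k, B, rfl, rfl⟩
      simp [insertHump]
      omega
    · rintro ⟨hlen, hm, A, k, B, rfl, rfl⟩
      refine ⟨A, k, B, ⟨?_, (isMotzkin_insertHump_iff ..).mp hm⟩, rfl, rfl⟩
      simp [insertHump] at hlen
      omega
  rw [← himage, Set.ncard_image_of_injective]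
  rintro ⟨A, k, B⟩ ⟨A', k', B'⟩ h
  simp only [Prod.mk.injEq] at h
  obtain ⟨rfl, rfl, rfl⟩ := insertHump_inj h.2 h.1
  rfl

lemma ncard_humpTriples_eq_ncard_bridges_U (n : ℕ) :
    (humpTriples n).ncard = {w ∈ bridges n | leadingStep w = some U}.ncard := by
  have hinj : Set.InjOn (fun x => bridgeOfHump x.1 x.2.1 x.2.2) (humpTriples n) := by
    rintro ⟨A, k, B⟩ ⟨-, hm⟩ ⟨A', k', B'⟩ ⟨-, hm'⟩ h
    obtain ⟨rfl, -, hsplit⟩ := replicate_F_append_cons_inj (by simp) (by simp) h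
    obtain ⟨rfl, rfl⟩ := split_unique hsplit hm hm'
    rfl
  rw [← hinj.ncard_image]
  congr 1
  ext w
  simp only [Set.mem_image, humpTriples, bridges, Set.mem_ofPred_eq, Prod.exists,
    leadingStep_eq_some_iff]
  constructor
  · rintro ⟨A, k, B, ⟨hlen, hm⟩, rfl⟩
    have := ((isMotzkin_append_iff _ _).mp hm).1
    refine ⟨⟨?_, ?_⟩, by simp, k, _, rfl⟩
    · simp [bridgeOfHump]; omega
    · simp [bridgeOfHump, level]; linarith
  · rintro ⟨⟨hlen, hh⟩, -, k, v, rfl⟩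
    obtain ⟨B, A, rfl, hm⟩ :=
      exists_split_of_height_eq_neg_one (v := v) (by simp [level] at hh; linarith)
    refine ⟨A, k, B, ⟨?_, hm⟩, rfl⟩
    simp at hlen
    omega

instance finite_bridges (n : ℕ) : Finite (bridges n) :=
  ((List.finite_length_eq MStep n).subset fun _ hw => hw.1).to_subtype

lemma ncard_bridges_eq_two_mul_add_one (n : ℕ) :
    (bridges n).ncard = 2 * {w ∈ bridges n | leadingStep w = some U}.ncard + 1 := by
  set up := {w ∈ bridges n | leadingStep w = some U}
  have hdown : {w ∈ bridges n | leadingStep w = some D} = List.map swap ⁻¹' up := by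
    ext w
    simp [up, bridges, leadingStep_map_swap, show swap U = D from rfl]
  have hflat : {w ∈ bridges n | leadingStep w = none} = {List.replicate n F} := by
    ext w
    simp only [bridges, Set.mem_ofPred_eq, leadingStep_eq_none_iff,
      Set.mem_singleton_iff]
    constructor
    · rintro ⟨⟨rfl, -⟩, h⟩
      exact h
    · rintro rfl
      simp
  have hsplit : bridges n = {w ∈ bridges n | leadingStep w = none} ∪
      (up ∪ {w ∈ bridges n | leadingStep w = some D}) := by
    ext w
    simp only [up, Set.mem_union, Set.mem_sep_iff]
    rcases h : leadingStep w with _ | ⟨_ | _ | _⟩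
    · simp
    · simp
    · exact ((leadingStep_eq_some_iff.mp h).1 rfl).elim
    · simp
  have hdisj {x y : Option MStep} (hxy : x ≠ y) :
      Disjoint {w ∈ bridges n | leadingStep w = x} {w ∈ bridges n | leadingStep w = y} :=
    Set.disjoint_left.mpr fun w ⟨_, hx⟩ ⟨_, hy⟩ => hxy (hx.symm.trans hy)
  rw [hsplit,
    Set.ncard_union_eq (Set.disjoint_union_right.mpr ⟨hdisj (by simp), hdisj (by simp)⟩),
    Set.ncard_union_eq (hdisj (by simp)), hflat, hdown, Set.ncard_singleton,
    Set.ncard_preimage_of_injective_subset_range map_swap_involutive.injective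
      fun w _ => map_swap_involutive.surjective w]
  ring

lemma count_ofFn {n : ℕ} (f : Fin n → MStep) (x : MStep) :
    (List.ofFn f).count x = #{i | f i = x} := by
  simpa [List.Vector.get] using
    (Fin.card_filter_univ_eq_vector_get_eq_count x ⟨List.ofFn f, List.length_ofFn⟩).symm

def ofPositions {n : ℕ} (S T : Finset (Fin n)) (i : Fin n) : MStep :=
  if i ∈ S then U else if i ∈ T then D else F

lemma filter_ofPositions_eq_U {n : ℕ} (S T : Finset (Fin n)) :
    univ.filter (ofPositions S T · = U) = S := by
  ext i
  rw [Finset.mem_filter]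
  simp only [Finset.mem_univ, true_and, ofPositions]
  split_ifs <;> simp_all

lemma filter_ofPositions_eq_D {n : ℕ} {S T : Finset (Fin n)} (hST : T ⊆ Sᶜ) :
    univ.filter (ofPositions S T · = D) = T := by
  ext i
  rw [Finset.mem_filter]
  simp only [Finset.mem_univ, true_and, ofPositions]
  split_ifs with hS
  · simpa using fun hT => mem_compl.mp (hST hT) hS
  all_goals simp_all

lemma card_filter_card_U_card_D (n a b : ℕ) :
    #{f : Fin n → MStep | #{i | f i = U} = a ∧ #{i | f i = D} = b} =
      n.choose a * (n - a).choose b := by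
  have hsigma : #((powersetCard a (univ : Finset (Fin n))).sigma fun S => powersetCard b Sᶜ) =
      n.choose a * (n - a).choose b := by
    rw [card_sigma, sum_congr rfl fun S hS => by
      rw [card_powersetCard, card_compl, (mem_powersetCard.mp hS).2, Fintype.card_fin],
      sum_const, card_powersetCard, card_univ, Fintype.card_fin, smul_eq_mul]
  rw [← hsigma]
  refine card_nbij' (fun f => ⟨univ.filter (f · = U), univ.filter (f · = D)⟩)
    (fun p => ofPositions p.1 p.2) ?_ ?_ ?_ ?_
  · intro f hf
    simp only [coe_filter, Set.mem_ofPred_eq, mem_univ, true_and] at hf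
    simp only [mem_coe, mem_sigma, mem_powersetCard, subset_univ, true_and, hf, and_true]
    intro i
    simp +contextual
  · rintro ⟨S, T⟩ hST
    simp only [mem_coe, mem_sigma, mem_powersetCard, subset_univ, true_and] at hST
    simp only [coe_filter, Set.mem_ofPred_eq, mem_univ, true_and]
    rw [filter_ofPositions_eq_U, filter_ofPositions_eq_D hST.2.1]
    exact ⟨hST.1, hST.2.2⟩
  · intro f _
    funext i
    cases h : f i <;> simp [ofPositions, h]
  · rintro ⟨S, T⟩ hST
    simp only [mem_coe, mem_sigma, mem_powersetCard, subset_univ, true_and] at hST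
    dsimp only
    rw [filter_ofPositions_eq_U, filter_ofPositions_eq_D hST.2.1]

lemma ncard_bridges_eq_sum_choose (n : ℕ) :
    (bridges n).ncard = ∑ j ∈ range (n + 1), n.choose j * (n - j).choose j := by
  have himage : bridges n =
      List.ofFn '' ((univ.filter fun f => #{i | f i = U} = #{i | f i = D} :
        Finset (Fin n → MStep)) : Set (Fin n → MStep)) := by
    ext w
    simp only [bridges, Set.mem_ofPred_eq, Set.mem_image, coe_filter, mem_univ, true_and,
      height_eq_count_sub_count, sub_eq_zero, Nat.cast_inj]
    constructor
    · rintro ⟨rfl, hw⟩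
      refine ⟨fun i => w[i], ?_, List.ofFn_getElem⟩
      simpa [← count_ofFn, List.ofFn_getElem] using hw
    · rintro ⟨f, hf, rfl⟩
      simpa [count_ofFn] using hf
  rw [himage, Set.ncard_image_of_injective _ List.ofFn_injective, Set.ncard_coe_finset,
    card_eq_sum_card_fiberwise (f := fun f : Fin n → MStep => #{i | f i = U}) (t := range (n + 1))
      fun _ _ => mem_range.mpr <| Nat.lt_succ_of_le <| (card_filter_le _ _).trans (card_fin n).le]
  refine sum_congr rfl fun j _ => ?_
  rw [filter_filter, ← card_filter_card_U_card_D]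
  congr 1
  exact filter_congr fun f _ => by omega

theorem two_mul_card_humps_add_one (n : ℕ) :
    2 * Nat.card {p : List MStep × ℕ //
        p.1.length = n ∧ IsMotzkin p.1 ∧ IsHumpAt p.1 p.2} + 1 =
      ∑ j ∈ range (n + 1), n.choose j * (n - j).choose j := by
  rw [← ncard_bridges_eq_sum_choose, ncard_bridges_eq_two_mul_add_one,
    ← ncard_humpTriples_eq_ncard_bridges_U, ← ncard_humps_eq_ncard_humpTriples]
  rfl

end MStep

theorem total_humps_motzkin (n : ℕ) :
    (Nat.card {p : List MStep × ℕ //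
        p.1.length = n ∧ IsMotzkin p.1 ∧ IsHumpAt p.1 p.2} : ℚ) =
      (1 / 2) *
        ((∑ j ∈ Finset.range (n + 1), (n.choose j * (n - j).choose j : ℚ)) - 1) := by
  have h := congrArg (Nat.cast : ℕ → ℚ) (MStep.two_mul_card_humps_add_one n)
  push_cast at h
  linarith
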